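/- Suppose θ < 0, G' has no negative cycle, T is an SPT of G rooted at s, and dist_G(x₀) + ω'(e₀) < dist_G(y₀). Set δ₁ = dist_G(x₀) + ω'(e₀) − dist_G(y₀). Then for every vertex u that is not a descendant of y₀ in T, δ₁ ≤ dist_{G'}(u) − dist_G(u) ≤ 0. -/

import Mathlib

namespace DynSPT

variable {V : Type*}

/-- The list of consecutive edges of a path given as a list of vertices. -/
def edgeList (l : List V) : List (V × V) := l.zip l.tail

/-- The length of a path with respect to the weight function `ω`. -/
def len (ω : V → V → ℝ) (l : List V) : ℝ :=
  ((edgeList l).map fun p => ω p.1 p.2).sum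

/-- `l` is a path in the directed graph with edge relation `E`. -/
def IsWalk (E : V → V → Prop) (l : List V) : Prop := l ≠ [] ∧ l.Chain' E

/-- `l` is a path from `u` to `v` in the directed graph with edge relation `E`. -/
def IsWalkFrom (E : V → V → Prop) (l : List V) (u v : V) : Prop :=
  IsWalk E l ∧ l.head? = some u ∧ l.getLast? = some v

/-- The path `l` traverses the edge `e`. -/
def Traverses (l : List V) (e : V × V) : Prop := e ∈ edgeList l

/-- `l` is a cycle: a path with at least one edge whose first and last vertices agree. -/
def IsCycle (E : V → V → Prop) (l : List V) : Prop :=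
  ∃ v, IsWalkFrom E l v v ∧ 2 ≤ l.length

/-- The weighted directed graph `(E, ω)` has a negative cycle. -/
def HasNegCycle (E : V → V → Prop) (ω : V → V → ℝ) : Prop :=
  ∃ l, IsCycle E l ∧ len ω l < 0

/-- The weighted directed graph `(E, ω)` has a zero-length cycle. -/
def HasZeroCycle (E : V → V → Prop) (ω : V → V → ℝ) : Prop :=
  ∃ l, IsCycle E l ∧ len ω l = 0

/-- The distance from `s` to `v`: the infimum of the lengths of paths from `s` to `v`. -/
noncomputable def dist (E : V → V → Prop) (ω : V → V → ℝ) (s v : V) : ℝ :=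
  sInf {L : ℝ | ∃ l, IsWalkFrom E l s v ∧ len ω l = L}

/-- A spanning tree of the directed graph `E` rooted at `s`, recorded by the parent
function together with, for every vertex `v`, the tree path from `s` to `v`. -/
structure RootedTree (E : V → V → Prop) (s : V) where
  parent : V → V
  path : V → List V
  path_root : path s = [s]
  parent_edge : ∀ v, v ≠ s → E (parent v) v
  path_eq : ∀ v, v ≠ s → path v = path (parent v) ++ [v]
  path_isWalkFrom : ∀ v, IsWalkFrom E (path v) s v

/-- `(a, b)` is an edge of the rooted tree `T`. -/
def RootedTree.IsEdge {E : V → V → Prop} {s : V} (T : RootedTree E s) (a b : V) : Prop :=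
  b ≠ s ∧ T.parent b = a

/-- `T` is a shortest-path tree for the weight function `ω`:
every tree path from the root is a shortest path. -/
def IsSPT {E : V → V → Prop} {s : V} (ω : V → V → ℝ) (T : RootedTree E s) : Prop :=
  ∀ v, len ω (T.path v) = dist E ω s v

/- ===== auxiliary lemmas ===== -/

lemma len_cons_cons (ω : V → V → ℝ) (a b : V) (l : List V) :
    len ω (a :: b :: l) = ω a b + len ω (b :: l) := by
  simp [len, edgeList]

lemma len_split' (ω : V → V → ℝ) (x : V) (ys : List V) :
    ∀ xs : List V, len ω (xs ++ x :: ys) = len ω (xs ++ [x]) + len ω (x :: ys)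
  | [] => by simp [len, edgeList]
  | [a] => by simp [len_cons_cons, len, edgeList]
  | a :: b :: xs => by
    have h := len_split' ω x ys (b :: xs)
    simp only [List.cons_append, len_cons_cons] at *
    rw [h]; ring

lemma mem_of_edgeList {a b : V} {l : List V} (h : (a, b) ∈ edgeList l) :
    a ∈ l ∧ b ∈ l := by
  obtain ⟨h1, h2⟩ := List.of_mem_zip h
  exact ⟨h1, l.tail_subset h2⟩

lemma edgeList_split {a b : V} {l : List V} (h : (a, b) ∈ edgeList l) :
    ∃ p q, l = p ++ a :: b :: q := by
  induction l with
  | nil => simp [edgeList] at h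
  | cons x t ih =>
    cases t with
    | nil => simp [edgeList] at h
    | cons y t' =>
      rw [show edgeList (x :: y :: t') = (x, y) :: edgeList (y :: t') from rfl,
        List.mem_cons] at h
      rcases h with h | h
      · obtain ⟨rfl, rfl⟩ := Prod.mk.injEq .. ▸ h
        exact ⟨[], t', rfl⟩
      · obtain ⟨p, q, hpq⟩ := ih h
        exact ⟨x :: p, q, by simp [hpq]⟩

lemma len_congr {ω ω' : V → V → ℝ} {l : List V}
    (h : ∀ e ∈ edgeList l, ω' e.1 e.2 = ω e.1 e.2) : len ω' l = len ω l := by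
  unfold len
  exact congrArg List.sum (List.map_congr_left h)

lemma not_nodup_split {l : List V} (h : ¬ l.Nodup) :
    ∃ (a : List V) (x : V) (b c : List V), l = a ++ x :: b ++ x :: c := by
  induction l with
  | nil => simp at h
  | cons y t ih =>
    by_cases hy : y ∈ t
    · obtain ⟨b, c, rfl⟩ := List.append_of_mem hy
      exact ⟨[], y, b, c, rfl⟩
    · have : ¬ t.Nodup := fun hn => h (List.nodup_cons.mpr ⟨hy, hn⟩)
      obtain ⟨a, x, b, c, rfl⟩ := ih this
      exact ⟨y :: a, x, b, c, rfl⟩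

lemma head?_append_cons (p : List V) (x : V) (ys zs : List V) :
    (p ++ x :: ys).head? = (p ++ x :: zs).head? := by cases p <;> simp

lemma getLast?_append_cons (p : List V) (x : V) (ys : List V) :
    (p ++ x :: ys).getLast? = (x :: ys).getLast? := by
  rw [List.getLast?_append]
  cases h : (x :: ys).getLast? with
  | none => simp at h
  | some a => simp

/-- Cycle removal: any walk contains a nodup walk between the same endpoints
whose length is no larger, provided there is no negative cycle. -/
lemma exists_nodup_walk {E : V → V → Prop} {ω : V → V → ℝ} (hG : ¬ HasNegCycle E ω) :
    ∀ n (l : List V) (u v : V), l.length ≤ n → IsWalkFrom E l u v →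
      ∃ l', IsWalkFrom E l' u v ∧ l'.Nodup ∧ len ω l' ≤ len ω l := by
  intro n
  induction n with
  | zero =>
    intro l u v hn hw
    interval_cases hl : l.length <;> simp_all [IsWalkFrom, IsWalk]
  | succ n ih =>
    intro l u v hn hw
    by_cases hnd : l.Nodup
    · exact ⟨l, hw, hnd, le_refl _⟩
    obtain ⟨a, x, b, c, rfl⟩ := not_nodup_split hnd
    obtain ⟨⟨hne, hch⟩, hhd, hlst⟩ := hw
    rw [show a ++ x :: b ++ x :: c = a ++ ((x :: b) ++ x :: c) by simp,
      List.Chain', List.isChain_append, List.isChain_append] at hch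
    obtain ⟨hca, ⟨hcxb, hcxc, hlink2⟩, hlink1⟩ := hch
    have hcyc : IsCycle E ((x :: b) ++ [x]) := by
      refine ⟨x, ⟨⟨by simp, ?_⟩, by simp, ?_⟩, by simp⟩
      · rw [List.Chain', List.isChain_append]
        exact ⟨hcxb, List.isChain_singleton x, by simpa using hlink2⟩
      · have := getLast?_append_cons (x :: b) x ([] : List V)
        simpa using this
    have hcyclen : 0 ≤ len ω ((x :: b) ++ [x]) := by
      by_contra hneg
      exact hG ⟨_, hcyc, lt_of_not_ge hneg⟩
    have hw' : IsWalkFrom E (a ++ x :: c) u v := by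
      refine ⟨⟨by simp, ?_⟩, ?_, ?_⟩
      · rw [List.Chain', List.isChain_append]
        refine ⟨hca, hcxc, ?_⟩
        intro p hp q hq
        refine hlink1 p hp q ?_
        simpa using hq
      · rw [← hhd, show a ++ x :: b ++ x :: c = a ++ x :: (b ++ x :: c) by simp]
        exact head?_append_cons a x c (b ++ x :: c)
      · rw [← hlst, getLast?_append_cons a x c]
        rw [show a ++ x :: b ++ x :: c = (a ++ x :: b) ++ x :: c by simp,
          getLast?_append_cons (a ++ x :: b) x c]
    have hlen : len ω (a ++ x :: c) ≤ len ω (a ++ x :: b ++ x :: c) := by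
      have e1 : len ω (a ++ x :: (b ++ x :: c)) =
          len ω (a ++ [x]) + len ω (x :: (b ++ x :: c)) := len_split' ω x (b ++ x :: c) a
      have e2 : len ω ((x :: b) ++ x :: c) = len ω ((x :: b) ++ [x]) + len ω (x :: c) :=
        len_split' ω x c (x :: b)
      have e3 : len ω (a ++ x :: c) = len ω (a ++ [x]) + len ω (x :: c) := len_split' ω x c a
      rw [show a ++ x :: b ++ x :: c = a ++ x :: (b ++ x :: c) by simp, e1,
        show x :: (b ++ x :: c) = (x :: b) ++ x :: c from rfl, e2, e3]
      linarith
    obtain ⟨l', hl'w, hl'nd, hl'len⟩ := ih (a ++ x :: c) u v (by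
      simp only [List.length_append, List.length_cons] at hn ⊢; omega) hw'
    exact ⟨l', hl'w, hl'nd, le_trans hl'len hlen⟩

lemma walk_append {E : V → V → Prop} (ω : V → V → ℝ) {l₁ l₂ : List V} {u v w : V}
    (h₁ : IsWalkFrom E l₁ u v) (h₂ : IsWalkFrom E l₂ v w) :
    IsWalkFrom E (l₁ ++ l₂.tail) u w ∧ len ω (l₁ ++ l₂.tail) = len ω l₁ + len ω l₂ := by
  obtain ⟨⟨hne₁, hch₁⟩, hhd₁, hlst₁⟩ := h₁
  obtain ⟨⟨hne₂, hch₂⟩, hhd₂, hlst₂⟩ := h₂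
  obtain ⟨q, rfl⟩ : ∃ q, l₂ = v :: q := by
    cases l₂ with
    | nil => simp at hhd₂
    | cons a q => exact ⟨q, by simpa using (by simpa using hhd₂ : a = v) ▸ rfl⟩
  obtain ⟨p, rfl⟩ : ∃ p, l₁ = p ++ [v] :=
    ⟨l₁.dropLast, (List.dropLast_append_getLast? v hlst₁).symm⟩
  have heq : (p ++ [v]) ++ (v :: q).tail = p ++ v :: q := by simp
  rw [heq]
  have hlink : ∀ x ∈ (p ++ [v]).getLast?, ∀ y ∈ q.head?, E x y := by
    intro x hx y hy
    have hx' : x = v := by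
      have := hx
      rw [getLast?_append_cons p v ([] : List V)] at this
      simpa using this.symm
    subst hx'
    cases q with
    | nil => simp at hy
    | cons b q' =>
      have : b = y := by simpa using hy
      subst this
      exact (List.isChain_cons_cons.mp hch₂).1
  refine ⟨⟨⟨by simp, ?_⟩, ?_, ?_⟩, ?_⟩
  · rw [show p ++ v :: q = (p ++ [v]) ++ q by simp, List.Chain', List.isChain_append]
    exact ⟨hch₁, (List.isChain_cons.mp hch₂).2, hlink⟩
  · rw [← hhd₁]; exact head?_append_cons p v q ([] : List V)
  · cases q with
    | nil =>
      have hv : v = w := by simpa using hlst₂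
      simpa [hv] using hlst₁
    | cons b q' => rw [getLast?_append_cons p v (b :: q'), ← hlst₂]
  · rw [len_split' ω v q p]

/-- With no negative cycle, there is a minimum-length walk among all walks. -/
lemma exists_min_walk [Fintype V] {E : V → V → Prop} {ω : V → V → ℝ} {s v : V}
    (hG : ¬ HasNegCycle E ω) (hr : ∃ l, IsWalkFrom E l s v) :
    ∃ l₀, IsWalkFrom E l₀ s v ∧ ∀ l, IsWalkFrom E l s v → len ω l₀ ≤ len ω l := by
  set Tset := {l : List V | IsWalkFrom E l s v ∧ l.Nodup} with hTset
  have hfin : Tset.Finite := by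
    refine (List.finite_length_le V (Fintype.card V)).subset ?_
    intro l hl
    exact hl.2.length_le_card
  have hne : Tset.Nonempty := by
    obtain ⟨l, hl⟩ := hr
    obtain ⟨l', hw', hnd', _⟩ := exists_nodup_walk hG l.length l s v le_rfl hl
    exact ⟨l', hw', hnd'⟩
  obtain ⟨l₀, hl₀, hmin⟩ := Set.exists_min_image Tset (len ω) hfin hne
  refine ⟨l₀, hl₀.1, fun l hl => ?_⟩
  obtain ⟨l', hw', hnd', hle'⟩ := exists_nodup_walk hG l.length l s v le_rfl hl
  exact (hmin l' ⟨hw', hnd'⟩).trans hle'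

lemma bddBelow_wset [Fintype V] {E : V → V → Prop} {ω : V → V → ℝ} {s v : V}
    (hG : ¬ HasNegCycle E ω) (hr : ∃ l, IsWalkFrom E l s v) :
    BddBelow {L : ℝ | ∃ l, IsWalkFrom E l s v ∧ len ω l = L} := by
  obtain ⟨l₀, _, hmin⟩ := exists_min_walk hG hr
  exact ⟨len ω l₀, fun L ⟨l, hw, hL⟩ => hL ▸ hmin l hw⟩

lemma wset_nonempty {E : V → V → Prop} (ω : V → V → ℝ) {s v : V}
    (hr : ∃ l, IsWalkFrom E l s v) :
    Set.Nonempty {L : ℝ | ∃ l, IsWalkFrom E l s v ∧ len ω l = L} := by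
  obtain ⟨l, hl⟩ := hr
  exact ⟨len ω l, l, hl, rfl⟩


theorem statement_16
    {V : Type*} [Fintype V] (E : V → V → Prop) (ω ω' : V → V → ℝ) (s x₀ y₀ : V)
    (hE₀ : E x₀ y₀)
    (hreach : ∀ v, ∃ l, IsWalkFrom E l s v)
    (hω' : ∀ a b, (a, b) ≠ (x₀, y₀) → ω' a b = ω a b)
    (hG : ¬ HasNegCycle E ω)
    (hθ : ω' x₀ y₀ - ω x₀ y₀ < 0) (hG' : ¬ HasNegCycle E ω')
    (T : RootedTree E s) (hT : IsSPT ω T)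
    (hlt : dist E ω s x₀ + ω' x₀ y₀ < dist E ω s y₀) :
    ∀ u, y₀ ∉ T.path u →
      dist E ω s x₀ + ω' x₀ y₀ - dist E ω s y₀ ≤ dist E ω' s u - dist E ω s u ∧
        dist E ω' s u - dist E ω s u ≤ 0 := by
  intro u _
  have hle : ∀ a b, ω' a b ≤ ω a b := by
    intro a b
    by_cases h : (a, b) = (x₀, y₀)
    · obtain ⟨rfl, rfl⟩ := Prod.mk.injEq .. ▸ h
      linarith
    · exact le_of_eq (hω' a b h)
  have len_mono : ∀ l : List V, len ω' l ≤ len ω' l ∧ len ω' l ≤ len ω l := by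
    intro l
    exact ⟨le_refl _, List.sum_le_sum (fun p _ => hle p.1 p.2)⟩
  have hbdd : ∀ v, BddBelow {L : ℝ | ∃ l, IsWalkFrom E l s v ∧ len ω l = L} :=
    fun v => bddBelow_wset hG (hreach v)
  have hbdd' : ∀ v, BddBelow {L : ℝ | ∃ l, IsWalkFrom E l s v ∧ len ω' l = L} :=
    fun v => bddBelow_wset hG' (hreach v)
  have hne : ∀ v, Set.Nonempty {L : ℝ | ∃ l, IsWalkFrom E l s v ∧ len ω l = L} :=
    fun v => wset_nonempty ω (hreach v)
  have hne' : ∀ v, Set.Nonempty {L : ℝ | ∃ l, IsWalkFrom E l s v ∧ len ω' l = L} :=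
    fun v => wset_nonempty ω' (hreach v)
  have dist_le : ∀ (v : V) (l : List V), IsWalkFrom E l s v → dist E ω s v ≤ len ω l :=
    fun v l hl => csInf_le (hbdd v) ⟨l, hl, rfl⟩
  -- upper bound
  have h1 : dist E ω' s u ≤ dist E ω s u := by
    calc dist E ω' s u ≤ len ω' (T.path u) := csInf_le (hbdd' u) ⟨_, T.path_isWalkFrom u, rfl⟩
      _ ≤ len ω (T.path u) := (len_mono _).2
      _ = dist E ω s u := hT u
  have hδneg : dist E ω s x₀ + ω' x₀ y₀ - dist E ω s y₀ ≤ 0 := by linarith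
  -- lower bound: every walk to u has ω'-length at least dist u + δ
  have key : ∀ l, IsWalkFrom E l s u →
      dist E ω s u + (dist E ω s x₀ + ω' x₀ y₀ - dist E ω s y₀) ≤ len ω' l := by
    intro l hl
    obtain ⟨l', hw', hnd', hle'⟩ := exists_nodup_walk hG' l.length l s u le_rfl hl
    refine le_trans ?_ hle'
    by_cases htr : (x₀, y₀) ∈ edgeList l'
    · obtain ⟨p, q, rfl⟩ := edgeList_split htr
      -- nodup facts
      rw [show p ++ x₀ :: y₀ :: q = p ++ (x₀ :: y₀ :: q) from rfl, List.nodup_append] at hnd'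
      obtain ⟨hndp, hndrest, hdisj⟩ := hnd'
      have hx₀notin : x₀ ∉ y₀ :: q := (List.nodup_cons.mp hndrest).1
      have hy₀notin : y₀ ∉ p ++ [x₀] := by
        intro hmem
        rcases List.mem_append.mp hmem with hm | hm
        · exact hdisj _ hm _ (by simp) rfl
        · exact hx₀notin (by simp [show y₀ = x₀ by simpa using hm] )
      -- walk decompositions
      obtain ⟨⟨_, hch⟩, hhd, hlst⟩ := hw'
      rw [show p ++ x₀ :: y₀ :: q = (p ++ [x₀]) ++ (y₀ :: q) by simp,
        List.Chain', List.isChain_append] at hch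
      obtain ⟨hchpre, hchsuf, _⟩ := hch
      have hpre : IsWalkFrom E (p ++ [x₀]) s x₀ := by
        refine ⟨⟨by simp, hchpre⟩, ?_, ?_⟩
        · rw [← hhd]; exact head?_append_cons p x₀ ([] : List V) (y₀ :: q)
        · rw [getLast?_append_cons p x₀ ([] : List V)]; simp
      have hsuf : IsWalkFrom E (y₀ :: q) y₀ u := by
        refine ⟨⟨by simp, hchsuf⟩, by simp, ?_⟩
        rw [← hlst, getLast?_append_cons p x₀ (y₀ :: q)]
        cases q <;> simp [List.getLast?_cons_cons]
      -- lengths agree off e₀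
      have hlenpre : len ω' (p ++ [x₀]) = len ω (p ++ [x₀]) := by
        refine len_congr (fun e he => hω' e.1 e.2 ?_)
        intro hcontra
        have : e.2 = y₀ := (Prod.mk.injEq .. ▸ hcontra).2
        exact hy₀notin (this ▸ (mem_of_edgeList (show (e.1, e.2) ∈ _ from he)).2)
      have hlensuf : len ω' (y₀ :: q) = len ω (y₀ :: q) := by
        refine len_congr (fun e he => hω' e.1 e.2 ?_)
        intro hcontra
        have : e.1 = x₀ := (Prod.mk.injEq .. ▸ hcontra).1
        exact hx₀notin (this ▸ (mem_of_edgeList (show (e.1, e.2) ∈ _ from he)).1)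
      -- length decomposition
      have hdecomp : len ω' (p ++ x₀ :: y₀ :: q) =
          len ω' (p ++ [x₀]) + ω' x₀ y₀ + len ω' (y₀ :: q) := by
        rw [len_split' ω' x₀ (y₀ :: q) p, len_cons_cons]
        ring
      -- the bounds
      have hb1 : dist E ω s x₀ ≤ len ω (p ++ [x₀]) := dist_le x₀ _ hpre
      have hb2 : dist E ω s u ≤ dist E ω s y₀ + len ω (y₀ :: q) := by
        have hstep : dist E ω s u - len ω (y₀ :: q) ≤ dist E ω s y₀ := by
          refine le_csInf (hne y₀) ?_
          rintro L ⟨m, hm, rfl⟩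
          obtain ⟨hwc, hlc⟩ := walk_append ω hm hsuf
          have := dist_le u _ hwc
          linarith
        linarith
      rw [hdecomp, hlenpre, hlensuf]
      linarith
    · have heq : len ω' l' = len ω l' := by
        refine len_congr (fun e he => hω' e.1 e.2 ?_)
        intro hcontra
        exact htr (hcontra ▸ (show (e.1, e.2) ∈ edgeList l' from he))
      have := dist_le u l' hw'
      rw [heq]
      linarith
  have h2 : dist E ω s u + (dist E ω s x₀ + ω' x₀ y₀ - dist E ω s y₀) ≤ dist E ω' s u := by
    refine le_csInf (hne' u) ?_
    rintro L ⟨l, hl, rfl⟩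
    exact key l hl
  exact ⟨by linarith, by linarith⟩


end DynSPT
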